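/- Let {E_i}_{i=1}^n be a POVM on ℂ^d and define its measurement strength R = d − (1/d) Σ_{i=1}^n (tr √E_i)². Then 0 ≤ R ≤ d − 1. Moreover, R = 0 if and only if every effect E_i is a nonnegative real scalar multiple of the identity matrix, and R = d − 1 if and only if every effect E_i has matrix rank at most one. -/

import Mathlib

/-!
Let `μ_j = √λ_j`, where `λ_j` are the eigenvalues of an effect `E`; then `tr √E = ∑ μ_j` and
`tr E = ∑ μ_j²`. Nonnegativity of the cross terms `μ_j μ_k` and Cauchy–Schwarz give
`tr E ≤ (tr √E)² ≤ d tr E`, with equality exactly when at most one `μ_j` is nonzero (rank `≤ 1`),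
resp. when all `μ_j` are equal (`E` scalar). Summing over the POVM, where `∑ tr E_i = d`, gives
`d ≤ ∑ (tr √E_i)² ≤ d²`, and equality in a sum of termwise inequalities holds only termwise.
-/

open Matrix BigOperators
open scoped ComplexOrder

namespace Matrix.PosSemidef

/-- The old Mathlib definition of the square root of a positive semidefinite matrix. -/
noncomputable def sqrt {n 𝕜 : Type*} [Fintype n] [RCLike 𝕜] [DecidableEq n]
    {A : Matrix n n 𝕜} (hA : A.PosSemidef) : Matrix n n 𝕜 :=
  hA.1.eigenvectorUnitary.1 * diagonal ((↑) ∘ Real.sqrt ∘ hA.1.eigenvalues) *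
    (star hA.1.eigenvectorUnitary : Matrix n n 𝕜)

end Matrix.PosSemidef

namespace Finset

variable {ι : Type*} [Fintype ι]

theorem sq_sum_eq_sum_sq_add_sum_erase [DecidableEq ι] (f : ι → ℝ) :
    (∑ j, f j) ^ 2 = ∑ j, f j ^ 2 + ∑ j, ∑ k ∈ univ.erase j, f j * f k := by
  rw [sq, sum_mul_sum, ← sum_add_distrib]
  refine sum_congr rfl fun j _ => ?_
  rw [← add_sum_erase _ _ (mem_univ j), sq]

theorem sq_sum_eq_sum_sq_iff_of_nonneg {f : ι → ℝ} (hf : ∀ j, 0 ≤ f j) :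
    (∑ j, f j) ^ 2 = ∑ j, f j ^ 2 ↔ Fintype.card {j // f j ≠ 0} ≤ 1 := by
  classical
  have hprod : ∀ j k, 0 ≤ f j * f k := fun j k => mul_nonneg (hf j) (hf k)
  rw [sq_sum_eq_sum_sq_add_sum_erase, add_eq_left,
    sum_eq_zero_iff_of_nonneg fun j _ => sum_nonneg fun k _ => hprod j k]
  simp only [mem_univ, true_imp_iff, sum_eq_zero_iff_of_nonneg fun k _ => hprod _ k, mem_erase,
    and_true, mul_eq_zero, Fintype.card_le_one_iff, Subtype.forall, Subtype.mk.injEq]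
  grind

theorem sum_sum_sub_sq (f : ι → ℝ) :
    ∑ j, ∑ k, (f j - f k) ^ 2 = 2 * (Fintype.card ι * ∑ j, f j ^ 2 - (∑ j, f j) ^ 2) := by
  simp only [sub_sq, sum_add_distrib, sum_sub_distrib, sum_const, card_univ, nsmul_eq_mul,
    ← mul_sum, ← sum_mul]
  ring

theorem sq_sum_eq_card_mul_sum_sq_iff {f : ι → ℝ} :
    (∑ j, f j) ^ 2 = Fintype.card ι * ∑ j, f j ^ 2 ↔ ∀ j k, f j = f k := by
  calc (∑ j, f j) ^ 2 = Fintype.card ι * ∑ j, f j ^ 2 ↔ ∑ j, ∑ k, (f j - f k) ^ 2 = 0 := by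
        rw [sum_sum_sub_sq]; constructor <;> intro h <;> linarith
    _ ↔ ∀ j k, f j = f k := by
        simp [sum_eq_zero_iff_of_nonneg, sq_nonneg, sum_nonneg, sub_eq_zero]

end Finset

theorem sub_one_div_mul_sum_bounds {ι : Type*} [Fintype ι] {d : ℝ} (hd : 0 < d)
    {e s : ι → ℝ} (he : ∑ i, e i = d) (hlow : ∀ i, e i ≤ s i) (hup : ∀ i, s i ≤ d * e i) :
    (0 ≤ d - 1 / d * ∑ i, s i ∧ d - 1 / d * ∑ i, s i ≤ d - 1) ∧
      (d - 1 / d * ∑ i, s i = 0 ↔ ∀ i, s i = d * e i) ∧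
      (d - 1 / d * ∑ i, s i = d - 1 ↔ ∀ i, e i = s i) := by
  have hde : ∑ i, d * e i = d * d := by rw [← Finset.mul_sum, he]
  have hsum_up : ∑ i, s i ≤ d * d := hde ▸ Finset.sum_le_sum fun i _ => hup i
  have hsum_low : d ≤ ∑ i, s i := he ▸ Finset.sum_le_sum fun i _ => hlow i
  have hupper : d - 1 / d * ∑ i, s i = (d * d - ∑ i, s i) / d := by field_simp
  have hlower : d - 1 / d * ∑ i, s i = d - 1 - (∑ i, s i - d) / d := by field_simp; ring
  refine ⟨⟨?_, ?_⟩, ?_, ?_⟩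
  · rw [hupper]
    exact div_nonneg (by linarith) hd.le
  · rw [hlower]
    have := div_nonneg (sub_nonneg.2 hsum_low) hd.le
    linarith
  · rw [hupper, div_eq_zero_iff, or_iff_left hd.ne', sub_eq_zero, eq_comm, ← hde,
      Finset.sum_eq_sum_iff_of_le fun i _ => hup i]
    simp
  · rw [hlower, sub_eq_self, div_eq_zero_iff, or_iff_left hd.ne', sub_eq_zero, eq_comm, ← he,
      Finset.sum_eq_sum_iff_of_le fun i _ => hlow i]
    simp

namespace Matrix

variable {n 𝕜 : Type*} [Fintype n] [DecidableEq n] [RCLike 𝕜] {A : Matrix n n 𝕜}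

theorem IsHermitian.eq_smul_one_iff (hA : A.IsHermitian) (c : ℝ) :
    A = (c : 𝕜) • 1 ↔ ∀ j, hA.eigenvalues j = c := by
  constructor
  · intro h j
    have hdiag := hA.conjStarAlgAut_star_eigenvectorUnitary.symm.trans
      (congrArg (Unitary.conjStarAlgAut 𝕜 _ (star hA.eigenvectorUnitary)) h)
    rw [map_smul, map_one, smul_one_eq_diagonal] at hdiag
    simpa using congrFun₂ hdiag j j
  · intro h
    have hconst : (RCLike.ofReal ∘ hA.eigenvalues : n → 𝕜) = fun _ => (c : 𝕜) :=
      funext fun j => by simp [h j]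
    rw [hA.spectral_theorem, hconst, ← smul_one_eq_diagonal, map_smul, map_one]

namespace PosSemidef

variable (hA : A.PosSemidef)

theorem re_trace_sqrt : RCLike.re hA.sqrt.trace = ∑ j, √(hA.1.eigenvalues j) := by
  rw [sqrt, trace_mul_cycle, Unitary.coe_star_mul_self, one_mul, trace_diagonal, map_sum]
  simp

theorem re_trace_eq_sum_sq_sqrt_eigenvalues :
    RCLike.re A.trace = ∑ j, √(hA.1.eigenvalues j) ^ 2 := by
  simp [hA.1.trace_eq_sum_eigenvalues, Real.sq_sqrt (hA.eigenvalues_nonneg _)]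

theorem rank_eq_card_sqrt_eigenvalues_ne_zero :
    A.rank = Fintype.card {j // √(hA.1.eigenvalues j) ≠ 0} := by
  simp only [hA.1.rank_eq_card_non_zero_eigs, ne_eq, Real.sqrt_eq_zero (hA.eigenvalues_nonneg _)]

theorem exists_nonneg_eq_smul_one_iff [Nonempty n] :
    (∃ c : ℝ, 0 ≤ c ∧ A = (c : 𝕜) • 1) ↔
      ∀ j k, √(hA.1.eigenvalues j) = √(hA.1.eigenvalues k) := by
  simp only [hA.1.eq_smul_one_iff,
    Real.sqrt_inj (hA.eigenvalues_nonneg _) (hA.eigenvalues_nonneg _)]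
  constructor
  · rintro ⟨c, -, hc⟩ j k
    rw [hc, hc]
  · intro h
    obtain ⟨j₀⟩ := ‹Nonempty n›
    exact ⟨_, hA.eigenvalues_nonneg j₀, fun j => h j j₀⟩

theorem re_trace_le_sq_re_trace_sqrt : RCLike.re A.trace ≤ (RCLike.re hA.sqrt.trace) ^ 2 := by
  rw [hA.re_trace_sqrt, hA.re_trace_eq_sum_sq_sqrt_eigenvalues]
  exact Finset.sum_sq_le_sq_sum_of_nonneg fun j _ => Real.sqrt_nonneg _

theorem sq_re_trace_sqrt_le_card_mul_re_trace :
    (RCLike.re hA.sqrt.trace) ^ 2 ≤ Fintype.card n * RCLike.re A.trace := by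
  rw [hA.re_trace_sqrt, hA.re_trace_eq_sum_sq_sqrt_eigenvalues]
  simpa using sq_sum_le_card_mul_sum_sq (s := Finset.univ)

theorem sq_re_trace_sqrt_eq_re_trace_iff :
    (RCLike.re hA.sqrt.trace) ^ 2 = RCLike.re A.trace ↔ A.rank ≤ 1 := by
  rw [hA.re_trace_sqrt, hA.re_trace_eq_sum_sq_sqrt_eigenvalues,
    hA.rank_eq_card_sqrt_eigenvalues_ne_zero]
  exact Finset.sq_sum_eq_sum_sq_iff_of_nonneg fun j => Real.sqrt_nonneg _

theorem sq_re_trace_sqrt_eq_card_mul_re_trace_iff [Nonempty n] :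
    (RCLike.re hA.sqrt.trace) ^ 2 = Fintype.card n * RCLike.re A.trace ↔
      ∃ c : ℝ, 0 ≤ c ∧ A = (c : 𝕜) • 1 := by
  rw [hA.re_trace_sqrt, hA.re_trace_eq_sum_sq_sqrt_eigenvalues, hA.exists_nonneg_eq_smul_one_iff]
  exact Finset.sq_sum_eq_card_mul_sum_sq_iff

end PosSemidef

end Matrix

/-- For a POVM `{E_i}` on `ℂ^d`, the measurement strength
`R = d − (1/d) Σ_i (tr √E_i)²` satisfies `0 ≤ R ≤ d − 1`; `R = 0` iff every effect is a
nonnegative real multiple of the identity, and `R = d − 1` iff every effect has rank at most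
one. -/
theorem measurement_strength_bounds
    (d n : ℕ) (hd : 1 ≤ d) (E : Fin n → Matrix (Fin d) (Fin d) ℂ)
    (hE : ∀ i, (E i).PosSemidef)
    (hsum : ∑ i, E i = 1)
    (R : ℝ)
    (hR : R = (d : ℝ) - (1 / (d : ℝ)) * ∑ i, (((hE i).sqrt).trace.re) ^ 2) :
    (0 ≤ R ∧ R ≤ (d : ℝ) - 1)
    ∧ (R = 0 ↔ ∀ i, ∃ c : ℝ, 0 ≤ c ∧ E i = (c : ℂ) • (1 : Matrix (Fin d) (Fin d) ℂ))
    ∧ (R = (d : ℝ) - 1 ↔ ∀ i, (E i).rank ≤ 1) := by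
  have : Nonempty (Fin d) := ⟨⟨0, hd⟩⟩
  have htrace : ∑ i, (E i).trace.re = d := by
    rw [← Complex.re_sum, ← trace_sum, hsum, trace_one, Fintype.card_fin, Complex.natCast_re]
  obtain ⟨hbounds, hscalar, hrank⟩ :=
    sub_one_div_mul_sum_bounds (Nat.cast_pos.2 hd) htrace (s := fun i => (hE i).sqrt.trace.re ^ 2)
      (fun i => by simpa using (hE i).re_trace_le_sq_re_trace_sqrt)
      (fun i => by simpa using (hE i).sq_re_trace_sqrt_le_card_mul_re_trace)
  subst hR
  refine ⟨hbounds, ?_, ?_⟩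
  · rw [hscalar]
    refine forall_congr' fun i => ?_
    simpa using (hE i).sq_re_trace_sqrt_eq_card_mul_re_trace_iff
  · rw [hrank]
    refine forall_congr' fun i => ?_
    simpa [eq_comm] using (hE i).sq_re_trace_sqrt_eq_re_trace_iff
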